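/- arXiv:1510.01653 — 5 statements merged into one kernel-verified Lean document; each statement's English description precedes it below -/
import Mathlib

section
/- Let Φ = (φ_1, …, φ_M) be a finite family of vectors in ℝ^N, and suppose c' ∈ ℝ^M with c'_i ≥ 0 attains the infimum of ‖I_N − S(c)‖₂ over all c ∈ ℝ^M with c_i ≥ 0. Then for every d ∈ ℝ^M with d_i ≥ 0 for all i, cond(S(c')) ≤ cond(S(d)); that is, S(c') has the smallest condition number among all matrices S(d) with nonnegative scalings d. -/
/-- The ℓ²→ℓ² operator norm (largest singular value) of a square real matrix. -/
noncomputable def opNorm {N : ℕ} (A : Matrix (Fin N) (Fin N) ℝ) : ℝ :=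
  ‖(Matrix.toEuclideanCLM (𝕜 := ℝ) A : EuclideanSpace ℝ (Fin N) →L[ℝ] EuclideanSpace ℝ (Fin N))‖

/-- `frameOp φ c = ∑ i, c i • φ i φ iᵀ`. -/
noncomputable def frameOp {N M : ℕ} (φ : Fin M → (Fin N → ℝ)) (c : Fin M → ℝ) :
    Matrix (Fin N) (Fin N) ℝ :=
  ∑ i, c i • Matrix.vecMulVec (φ i) (φ i)

/-- The largest eigenvalue of a Hermitian real matrix. -/
noncomputable def lamMax {N : ℕ} {A : Matrix (Fin N) (Fin N) ℝ} (hA : A.IsHermitian) : ℝ :=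
  ⨆ i, hA.eigenvalues i

/-- The smallest eigenvalue of a Hermitian real matrix. -/
noncomputable def lamMin {N : ℕ} {A : Matrix (Fin N) (Fin N) ℝ} (hA : A.IsHermitian) : ℝ :=
  ⨅ i, hA.eigenvalues i

/-!
For a symmetric `S` with eigenvalues `λᵢ`, unitary diagonalisation gives
`‖I - t S‖₂ = maxᵢ |1 - t λᵢ|`. If `S(d)` has extreme eigenvalues `0 < a ≤ A`, the rescaling
`t = 2 / (A + a)` gives `‖I - S(t d)‖₂ ≤ ρ := (A - a) / (A + a)`, so optimality of `c'` puts the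
spectrum of `S(c')` inside `[1 - ρ, 1 + ρ]`, whose extreme ratio `(1 + ρ) / (1 - ρ)` is `A / a`.
-/

open Matrix

lemma frameOp_posSemidef {N M : ℕ} (φ : Fin M → (Fin N → ℝ)) {c : Fin M → ℝ}
    (hc : ∀ i, 0 ≤ c i) : (frameOp φ c).PosSemidef :=
  Finset.sum_induction _ PosSemidef (fun _ _ => PosSemidef.add) PosSemidef.zero
    fun i _ => (posSemidef_vecMulVec_self_star (φ i)).smul (hc i)

lemma frameOp_smul {N M : ℕ} (φ : Fin M → (Fin N → ℝ)) (t : ℝ) (c : Fin M → ℝ) :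
    frameOp φ (t • c) = t • frameOp φ c := by
  simp [frameOp, Finset.smul_sum, smul_smul]

section Eigenvalues

variable {N : ℕ} {S : Matrix (Fin N) (Fin N) ℝ} (hS : S.IsHermitian)

lemma lamMin_le_eigenvalues (i : Fin N) : lamMin hS ≤ hS.eigenvalues i :=
  ciInf_le (Set.finite_range _).bddBelow i

lemma eigenvalues_le_lamMax (i : Fin N) : hS.eigenvalues i ≤ lamMax hS :=
  le_ciSup (Set.finite_range _).bddAbove i

variable [Nonempty (Fin N)]

lemma le_lamMin {b : ℝ} (h : ∀ i, b ≤ hS.eigenvalues i) : b ≤ lamMin hS := le_ciInf h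

lemma lamMax_le {b : ℝ} (h : ∀ i, hS.eigenvalues i ≤ b) : lamMax hS ≤ b := ciSup_le h

lemma lamMin_le_lamMax : lamMin hS ≤ lamMax hS :=
  (lamMin_le_eigenvalues hS (Classical.arbitrary _)).trans (eigenvalues_le_lamMax hS _)

end Eigenvalues

section DistanceToIdentity

variable {N : ℕ} {S : Matrix (Fin N) (Fin N) ℝ} (hS : S.IsHermitian)

open scoped Matrix.Norms.L2Operator in
lemma opNorm_one_sub_smul (t : ℝ) :
    opNorm (1 - t • S) = ‖fun i => 1 - t * hS.eigenvalues i‖ := by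
  have hdiag : 1 - t • S = Unitary.conjStarAlgAut ℝ _ hS.eigenvectorUnitary
      (diagonal fun i => 1 - t * hS.eigenvalues i) := by
    conv_lhs => rw [hS.spectral_theorem]
    rw [← map_one (Unitary.conjStarAlgAut ℝ _ hS.eigenvectorUnitary), ← map_smul, ← map_sub]
    congr 1
    ext i j
    by_cases h : i = j <;> simp [h, one_apply]
  change ‖1 - t • S‖ = _
  rw [hdiag, Unitary.conjStarAlgAut_apply, ← Unitary.coe_star, CStarRing.norm_mul_coe_unitary,
    CStarRing.norm_coe_unitary_mul, l2_opNorm_diagonal]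

lemma opNorm_one_sub_smul_le_iff {t r : ℝ} (hr : 0 ≤ r) :
    opNorm (1 - t • S) ≤ r ↔ ∀ i, |1 - t * hS.eigenvalues i| ≤ r := by
  simp only [opNorm_one_sub_smul hS, pi_norm_le_iff_of_nonneg hr, Real.norm_eq_abs]

lemma abs_one_sub_eigenvalues_le_opNorm (i : Fin N) :
    |1 - hS.eigenvalues i| ≤ opNorm (1 - S) := by
  calc |1 - hS.eigenvalues i| = ‖(fun j => 1 - 1 * hS.eigenvalues j) i‖ := by simp
    _ ≤ ‖fun j => 1 - 1 * hS.eigenvalues j‖ :=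
      norm_le_pi_norm (fun j => 1 - 1 * hS.eigenvalues j) i
    _ = opNorm (1 - S) := by rw [← opNorm_one_sub_smul, one_smul]

variable [Nonempty (Fin N)]

lemma lamMax_le_one_add_opNorm : lamMax hS ≤ 1 + opNorm (1 - S) :=
  lamMax_le hS fun i => by linarith [(abs_le.mp (abs_one_sub_eigenvalues_le_opNorm hS i)).1]

lemma one_sub_opNorm_le_lamMin : 1 - opNorm (1 - S) ≤ lamMin hS :=
  le_lamMin hS fun i => by linarith [(abs_le.mp (abs_one_sub_eigenvalues_le_opNorm hS i)).2]

lemma opNorm_one_sub_smul_le_of_lamMin_pos (ha : 0 < lamMin hS) :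
    opNorm (1 - (2 / (lamMax hS + lamMin hS)) • S) ≤
      (lamMax hS - lamMin hS) / (lamMax hS + lamMin hS) := by
  have haA := lamMin_le_lamMax hS
  have hs : 0 < lamMax hS + lamMin hS := by linarith
  rw [opNorm_one_sub_smul_le_iff hS (div_nonneg (by linarith) hs.le)]
  intro i
  have hlo := lamMin_le_eigenvalues hS i
  have hhi := eigenvalues_le_lamMax hS i
  rw [show 1 - 2 / (lamMax hS + lamMin hS) * hS.eigenvalues i
      = (lamMax hS + lamMin hS - 2 * hS.eigenvalues i) / (lamMax hS + lamMin hS) by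
    field_simp, abs_div, abs_of_pos hs, div_le_div_iff_of_pos_right hs, abs_le]
  constructor <;> linarith

lemma lamMax_mul_le_lamMin_mul_of_opNorm_one_sub_le {a A : ℝ} (ha : 0 < a) (haA : a ≤ A)
    (h : opNorm (1 - S) ≤ (A - a) / (A + a)) : lamMax hS * a ≤ lamMin hS * A := by
  set ρ := opNorm (1 - S)
  have hρ : ρ * (A + a) ≤ A - a := (le_div_iff₀ (by linarith)).mp h
  calc lamMax hS * a ≤ (1 + ρ) * a := by gcongr; exact lamMax_le_one_add_opNorm hS
    _ ≤ (1 - ρ) * A := by linarith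
    _ ≤ lamMin hS * A := by gcongr; exacts [by linarith, one_sub_opNorm_le_lamMin hS]

end DistanceToIdentity

/-- if `c' ≥ 0` attains the infimum of `‖I - S(c)‖₂` over `c ≥ 0`, then
`S(c')` has the smallest condition number among all `S(d)` with `d ≥ 0`; the inequality
`cond(S(c')) ≤ cond(S(d))` is expressed in the cross-multiplied form
`λ_max(S(c')) · λ_min(S(d)) ≤ λ_min(S(c')) · λ_max(S(d))`, which also covers the
value `∞` when the smallest eigenvalue vanishes. -/
theorem stmt_5 (N M : ℕ) (hN : 0 < N) (φ : Fin M → (Fin N → ℝ))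
    (hH : ∀ c : Fin M → ℝ, (frameOp φ c).IsHermitian)
    (c' : Fin M → ℝ) (hc' : ∀ i, 0 ≤ c' i)
    (hopt : ∀ d : Fin M → ℝ, (∀ i, 0 ≤ d i) →
      opNorm (1 - frameOp φ c') ≤ opNorm (1 - frameOp φ d)) :
    ∀ d : Fin M → ℝ, (∀ i, 0 ≤ d i) →
      lamMax (hH c') * lamMin (hH d) ≤ lamMin (hH c') * lamMax (hH d) := by
  intro d hd
  have : Nonempty (Fin N) := ⟨⟨0, hN⟩⟩
  have hmin_nonneg : ∀ {c : Fin M → ℝ}, (∀ i, 0 ≤ c i) → 0 ≤ lamMin (hH c) :=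
    fun hc => le_lamMin _ (frameOp_posSemidef φ hc).eigenvalues_nonneg
  have haA := lamMin_le_lamMax (hH d)
  rcases (hmin_nonneg hd).eq_or_lt with ha | ha
  · rw [← ha, mul_zero]
    exact mul_nonneg (hmin_nonneg hc') (ha ▸ haA)
  · refine lamMax_mul_le_lamMin_mul_of_opNorm_one_sub_le (hH c') ha haA ?_
    set t := 2 / (lamMax (hH d) + lamMin (hH d))
    have ht : 0 ≤ t := div_nonneg zero_le_two (by linarith)
    calc opNorm (1 - frameOp φ c') ≤ opNorm (1 - frameOp φ (t • d)) :=
          hopt _ fun i => mul_nonneg ht (hd i)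
      _ = opNorm (1 - t • frameOp φ d) := by rw [frameOp_smul]
      _ ≤ _ := opNorm_one_sub_smul_le_of_lamMin_pos (hH d) ha
end

section
/- Let Φ = (φ_1, …, φ_M) be a frame for ℝ^N (its vectors span ℝ^N), and suppose c' ∈ ℝ^M with c'_i ≥ 0 attains the infimum of ‖I_N − S(c)‖₂ over all c ∈ ℝ^M with c_i ≥ 0. Then the matrix S(c') is invertible (equivalently, positive definite). -/
/-! The frame operator `S(1) = ∑ φᵢ φᵢᵀ` of a spanning family is positive definite, so its
spectrum lies in `(0, ‖S(1)‖]` and `‖I - t S(1)‖ < 1` for `t = ‖S(1)‖⁻¹`. The constant weights `t`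
are admissible, hence the optimal `c'` also has `‖I - S(c')‖ < 1`. Every eigenvalue `λ` of the
symmetric matrix `S(c')` then satisfies `|1 - λ| < 1`, so `S(c')` is positive definite. -/

section SpectralBounds

variable {A : Type*} [NormedRing A] [StarRing A] [NormedAlgebra ℝ A] [PartialOrder A]
  [StarOrderedRing A] [IsometricContinuousFunctionalCalculus ℝ A IsSelfAdjoint]
  [NonnegSpectrumClass ℝ A]

lemma IsStrictlyPositive.norm_one_sub_inv_norm_smul_lt_one {a : A} (ha : IsStrictlyPositive a) :
    ‖1 - ‖a‖⁻¹ • a‖ < 1 := by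
  have hsa := ha.isSelfAdjoint
  rw [← cfc_id' ℝ a, ← cfc_smul .., ← cfc_one ℝ a, ← cfc_sub .., cfc_id' ℝ a]
  refine norm_cfc_lt one_pos fun x hx => ?_
  have hx_pos : 0 < x := ha.spectrum_pos hx
  have hx_le : x ≤ ‖a‖ := (Real.le_norm_self x).trans
    (IsometricContinuousFunctionalCalculus.norm_spectrum_le a hx)
  have hscaled_pos : 0 < ‖a‖⁻¹ * x := mul_pos (inv_pos.mpr (hx_pos.trans_le hx_le)) hx_pos
  have hscaled_le : ‖a‖⁻¹ * x ≤ 1 := inv_mul_le_one_of_le₀ hx_le (norm_nonneg a)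
  show ‖1 - ‖a‖⁻¹ * x‖ < 1
  rw [Real.norm_eq_abs, abs_lt]
  constructor <;> linarith

lemma IsSelfAdjoint.isStrictlyPositive_of_norm_one_sub_lt_one {a : A} (ha : IsSelfAdjoint a)
    (h : ‖1 - a‖ < 1) : IsStrictlyPositive a := by
  rw [StarOrderedRing.isStrictlyPositive_iff_spectrum_pos (R := ℝ) a]
  intro x hx
  have hle : ‖1 - x‖ ≤ ‖1 - a‖ := by
    have hcfc : cfc (fun y : ℝ => 1 - y) a = 1 - a := by
      rw [cfc_sub .., cfc_const_one ℝ a, cfc_id' ℝ a]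
    simpa only [hcfc] using norm_apply_le_norm_cfc (fun y : ℝ => 1 - y) a hx
  linarith [Real.le_norm_self (1 - x)]

end SpectralBounds

namespace Matrix

open scoped MatrixOrder Matrix.Norms.L2Operator

-- Under `Matrix.Norms.L2Operator`, `‖S‖` is `opNorm S` by definition.

lemma PosDef.exists_opNorm_one_sub_smul_lt_one {N : ℕ} {S : Matrix (Fin N) (Fin N) ℝ}
    (hS : S.PosDef) : ∃ t : ℝ, 0 ≤ t ∧ opNorm (1 - t • S) < 1 :=
  ⟨‖S‖⁻¹, inv_nonneg.mpr (norm_nonneg S),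
    hS.isStrictlyPositive.norm_one_sub_inv_norm_smul_lt_one⟩

lemma IsHermitian.posDef_of_opNorm_one_sub_lt_one {N : ℕ} {S : Matrix (Fin N) (Fin N) ℝ}
    (hS : S.IsHermitian) (h : opNorm (1 - S) < 1) : S.PosDef :=
  isStrictlyPositive_iff_posDef.1 (hS.isSelfAdjoint.isStrictlyPositive_of_norm_one_sub_lt_one h)

lemma mulVec_injective_of_span_eq_top {ι n R : Type*} [Fintype n] [CommRing R]
    {φ : ι → n → R} (hspan : Submodule.span R (Set.range φ) = ⊤) :
    Function.Injective (of φ).mulVec := by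
  refine (injective_iff_map_eq_zero (of φ).mulVecLin).2 fun x hx => ?_
  have hφx : ∀ i, dotProductBilin R R x (φ i) = 0 := fun i => by
    rw [dotProductBilin_apply_apply, dotProduct_comm]
    exact congrFun hx i
  have hx_zero : dotProductBilin R R x = 0 := LinearMap.ext_on_range hspan hφx
  exact dotProduct_eq_zero_iff.1 fun w => LinearMap.congr_fun hx_zero w

end Matrix

open Matrix

lemma frameOp_const_eq_smul {N M : ℕ} (φ : Fin M → (Fin N → ℝ)) (t : ℝ) :
    frameOp φ (fun _ => t) = t • frameOp φ 1 := by
  simp only [frameOp, Pi.one_apply, one_smul, Finset.smul_sum]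

lemma isHermitian_frameOp {N M : ℕ} (φ : Fin M → (Fin N → ℝ)) (c : Fin M → ℝ) :
    (frameOp φ c).IsHermitian := by
  rw [isHermitian_iff_isSelfAdjoint, frameOp]
  refine isSelfAdjoint_sum _ fun i _ => (IsSelfAdjoint.all (c i)).smul ?_
  rw [IsSelfAdjoint, star_eq_conjTranspose, conjTranspose_eq_transpose_of_trivial,
    transpose_vecMulVec]

lemma frameOp_one_eq_conjTranspose_mul {N M : ℕ} (φ : Fin M → (Fin N → ℝ)) :
    frameOp φ 1 = (of φ)ᴴ * of φ := by
  ext j k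
  simp [frameOp, mul_apply, Matrix.sum_apply, vecMulVec_apply]

lemma posDef_frameOp_one {N M : ℕ} {φ : Fin M → (Fin N → ℝ)}
    (hspan : Submodule.span ℝ (Set.range φ) = ⊤) : (frameOp φ 1).PosDef := by
  rw [frameOp_one_eq_conjTranspose_mul]
  exact .conjTranspose_mul_self _ (mulVec_injective_of_span_eq_top hspan)

theorem stmt_8_general (N M : ℕ) (φ : Fin M → (Fin N → ℝ))
    (hspan : Submodule.span ℝ (Set.range φ) = ⊤)
    (c' : Fin M → ℝ)
    (hopt : ∀ d : Fin M → ℝ, (∀ i, 0 ≤ d i) →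
      opNorm (1 - frameOp φ c') ≤ opNorm (1 - frameOp φ d)) :
    IsUnit (frameOp φ c') ∧ (frameOp φ c').PosDef := by
  obtain ⟨t, ht, hlt⟩ := (posDef_frameOp_one hspan).exists_opNorm_one_sub_smul_lt_one
  have hc'_lt : opNorm (1 - frameOp φ c') < 1 :=
    (hopt _ fun _ => ht).trans_lt (by rwa [frameOp_const_eq_smul])
  have hpd := (isHermitian_frameOp φ c').posDef_of_opNorm_one_sub_lt_one hc'_lt
  exact ⟨hpd.isUnit, hpd⟩

/-- if `Φ` spans `ℝ^N` and `c' ≥ 0` attains the infimum of `‖I - S(c)‖₂`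
over `c ≥ 0`, then `S(c')` is invertible (equivalently, positive definite). -/
theorem stmt_8 (N M : ℕ) (φ : Fin M → (Fin N → ℝ))
    (hspan : Submodule.span ℝ (Set.range φ) = ⊤)
    (c' : Fin M → ℝ) (hc' : ∀ i, 0 ≤ c' i)
    (hopt : ∀ d : Fin M → ℝ, (∀ i, 0 ≤ d i) →
      opNorm (1 - frameOp φ c') ≤ opNorm (1 - frameOp φ d)) :
    IsUnit (frameOp φ c') ∧ (frameOp φ c').PosDef :=
  stmt_8_general N M φ hspan c' hopt
end

section
/- Let Φ = (φ_1, …, φ_M) be a unit-norm frame for ℝ^N (each ‖φ_i‖ = 1 and the φ_i span ℝ^N). If c' ∈ ℝ^M with c'_i ≥ 0 attains the infimum of ‖I_N − S(c)‖₂ over all c ∈ ℝ^M with c_i ≥ 0, then c'_i ≤ 2N for every i = 1, …, M; in particular the optimal scalings are uniformly bounded by a constant depending only on N. -/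
/-!
Since `S(0) = 0`, the optimal value is at most `‖I‖₂ = 1`. Testing `I - S(c')` against the unit
vector `φ_i` gives `|1 - ∑ⱼ c'ⱼ ⟨φⱼ, φᵢ⟩²| ≤ 1`, and the `j = i` term alone is `c'ᵢ`, so in fact
`c'ᵢ ≤ 2 ≤ 2N`.
-/

open scoped RealInnerProductSpace Matrix

theorem opNorm_one {N : ℕ} [NeZero N] : opNorm (1 : Matrix (Fin N) (Fin N) ℝ) = 1 := by
  simp only [opNorm, map_one, norm_one]

theorem abs_dotProduct_mulVec_le_opNorm {N : ℕ} (A : Matrix (Fin N) (Fin N) ℝ) (v : Fin N → ℝ) :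
    |v ⬝ᵥ A *ᵥ v| ≤ opNorm A * (v ⬝ᵥ v) := by
  set x : EuclideanSpace ℝ (Fin N) := WithLp.toLp 2 v
  have hx : ‖x‖ ^ 2 = v ⬝ᵥ v := by
    rw [← real_inner_self_eq_norm_sq, EuclideanSpace.inner_toLp_toLp, star_trivial]
  calc |v ⬝ᵥ A *ᵥ v| = |⟪x, Matrix.toEuclideanCLM (𝕜 := ℝ) A x⟫| := by
        rw [Matrix.inner_toEuclideanCLM]
    _ ≤ ‖x‖ * ‖Matrix.toEuclideanCLM (𝕜 := ℝ) A x‖ := abs_real_inner_le_norm _ _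
    _ ≤ ‖x‖ * (opNorm A * ‖x‖) := by gcongr; exact ContinuousLinearMap.le_opNorm _ _
    _ = opNorm A * (v ⬝ᵥ v) := by rw [← hx]; ring

theorem dotProduct_frameOp_mulVec {N M : ℕ} (φ : Fin M → (Fin N → ℝ)) (c : Fin M → ℝ)
    (v : Fin N → ℝ) : v ⬝ᵥ frameOp φ c *ᵥ v = ∑ j, c j * (φ j ⬝ᵥ v) ^ 2 := by
  simp only [frameOp, Matrix.sum_mulVec, Matrix.smul_mulVec, Matrix.vecMulVec_mulVec,
    dotProduct_sum, dotProduct_smul, op_smul_eq_smul, smul_eq_mul]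
  refine Finset.sum_congr rfl fun j _ => ?_
  rw [dotProduct_comm v]
  ring

theorem le_one_add_opNorm_one_sub_frameOp {N M : ℕ} (φ : Fin M → (Fin N → ℝ)) {c : Fin M → ℝ}
    (hc : ∀ j, 0 ≤ c j) {i : Fin M} (hi : φ i ⬝ᵥ φ i = 1) :
    c i ≤ 1 + opNorm (1 - frameOp φ c) := by
  have hquad := abs_dotProduct_mulVec_le_opNorm (1 - frameOp φ c) (φ i)
  rw [Matrix.sub_mulVec, Matrix.one_mulVec, dotProduct_sub, dotProduct_frameOp_mulVec, hi,
    mul_one] at hquad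
  have hdiag : c i ≤ ∑ j, c j * (φ j ⬝ᵥ φ i) ^ 2 := by
    simpa [hi] using Finset.single_le_sum (f := fun j => c j * (φ j ⬝ᵥ φ i) ^ 2)
      (fun j _ => mul_nonneg (hc j) (sq_nonneg _)) (Finset.mem_univ i)
  linarith [neg_abs_le (1 - ∑ j, c j * (φ j ⬝ᵥ φ i) ^ 2)]

theorem stmt_11_general (N M : ℕ) (φ : Fin M → (Fin N → ℝ))
    (hunit : ∀ i, ∑ k, (φ i k) ^ 2 = 1)
    (c' : Fin M → ℝ) (hc' : ∀ i, 0 ≤ c' i)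
    (hopt : ∀ d : Fin M → ℝ, (∀ i, 0 ≤ d i) →
      opNorm (1 - frameOp φ c') ≤ opNorm (1 - frameOp φ d)) :
    ∀ i, c' i ≤ 2 * N := by
  intro i
  have hi : φ i ⬝ᵥ φ i = 1 := by simpa [dotProduct, sq] using hunit i
  have : NeZero N := ⟨by rintro rfl; simp at hi⟩
  have hle_one : opNorm (1 - frameOp φ c') ≤ 1 := by
    simpa [frameOp, opNorm_one] using hopt 0 fun _ => le_rfl
  have hN : (1 : ℝ) ≤ N := Nat.one_le_cast.2 NeZero.one_le
  linarith [le_one_add_opNorm_one_sub_frameOp φ hc' hi]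

/-- if `Φ` is a unit-norm frame for `ℝ^N` and `c' ≥ 0` attains the infimum
of `‖I - S(c)‖₂` over `c ≥ 0`, then `c'_i ≤ 2N` for every `i`. -/
theorem stmt_11 (N M : ℕ) (φ : Fin M → (Fin N → ℝ))
    (hunit : ∀ i, ∑ k, (φ i k) ^ 2 = 1)
    (hspan : Submodule.span ℝ (Set.range φ) = ⊤)
    (c' : Fin M → ℝ) (hc' : ∀ i, 0 ≤ c' i)
    (hopt : ∀ d : Fin M → ℝ, (∀ i, 0 ≤ d i) →
      opNorm (1 - frameOp φ c') ≤ opNorm (1 - frameOp φ d)) :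
    ∀ i, c' i ≤ 2 * N :=
  stmt_11_general N M φ hunit c' hc' hopt
end

section
/- Let Φ = (φ_1, …, φ_M) be a finite family of vectors in ℝ^N, and suppose c ∈ ℝ^M with c_i ≥ 0 attains the infimum of ‖I_N − Σ_{i=1}^M d_i φ_i φ_iᵀ‖_F over all d ∈ ℝ^M with d_i ≥ 0. Then for every index i with c_i > 0, Σ_{j=1}^M c_j ⟨φ_i, φ_j⟩² = ‖φ_i‖². -/
open Matrix

/-- The Frobenius norm of a square real matrix. -/
noncomputable def frobNorm {N : ℕ} (A : Matrix (Fin N) (Fin N) ℝ) : ℝ :=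
  Real.sqrt (∑ i, ∑ j, (A i j) ^ 2)

set_option maxHeartbeats 1000000 in
/-- if `c ≥ 0` attains the infimum of `‖I - ∑ d_i φ_i φ_iᵀ‖_F` over
`d ≥ 0`, then for every `i` with `c_i > 0` we have `∑_j c_j ⟨φ_i, φ_j⟩² = ‖φ_i‖²`. -/
theorem stmt_14 (N M : ℕ) (φ : Fin M → (Fin N → ℝ))
    (c : Fin M → ℝ) (hc : ∀ i, 0 ≤ c i)
    (hopt : ∀ d : Fin M → ℝ, (∀ i, 0 ≤ d i) →
      frobNorm (1 - frameOp φ c) ≤ frobNorm (1 - frameOp φ d)) :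
    ∀ i, 0 < c i → ∑ j, c j * (φ i ⬝ᵥ φ j) ^ 2 = φ i ⬝ᵥ φ i := by
  intro i hi
  set x : Fin N → ℝ := φ i with hx
  set F : (Fin M → ℝ) → ℝ := fun d => ∑ p, ∑ q, ((1 - frameOp φ d) p q) ^ 2 with hF
  have hFnonneg : ∀ d, 0 ≤ F d := fun d =>
    Finset.sum_nonneg fun p _ => Finset.sum_nonneg fun q _ => sq_nonneg _
  have hFle : ∀ d : Fin M → ℝ, (∀ j, 0 ≤ d j) → F c ≤ F d := by
    intro d hd
    have h : Real.sqrt (F c) ≤ Real.sqrt (F d) := hopt d hd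
    nlinarith [Real.sq_sqrt (hFnonneg c), Real.sq_sqrt (hFnonneg d),
      Real.sqrt_nonneg (F d), Real.sqrt_nonneg (F c)]
  set A : Matrix (Fin N) (Fin N) ℝ := 1 - frameOp φ c with hA
  set B : ℝ := ∑ p, ∑ q, A p q * (x p * x q) with hBdef
  set a : ℝ := ∑ p, ∑ q, (x p * x q) ^ 2 with hadef
  have ha : 0 ≤ a := Finset.sum_nonneg fun p _ => Finset.sum_nonneg fun q _ => sq_nonneg _
  have entry : ∀ t : ℝ, ∀ p q, (1 - frameOp φ (fun j => c j + if j = i then t else 0)) p q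
      = A p q - t * (x p * x q) := by
    intro t p q
    simp only [hA, Matrix.sub_apply, frameOp, Matrix.sum_apply, Matrix.smul_apply,
      Matrix.vecMulVec_apply, smul_eq_mul, add_mul, Finset.sum_add_distrib,
      ite_mul, zero_mul, Finset.sum_ite_eq', Finset.mem_univ, if_true, hx]
    ring
  have expand : ∀ t : ℝ, F (fun j => c j + if j = i then t else 0)
      = F c - 2 * t * B + t ^ 2 * a := by
    intro t
    have e1 : F (fun j => c j + if j = i then t else 0)
        = ∑ p, ∑ q, (A p q - t * (x p * x q)) ^ 2 := by
      refine Finset.sum_congr rfl fun p _ => Finset.sum_congr rfl fun q _ => ?_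
      rw [entry]
    rw [e1, hF, hBdef, hadef]
    simp only [Finset.mul_sum]
    rw [← Finset.sum_sub_distrib, ← Finset.sum_add_distrib]
    refine Finset.sum_congr rfl fun p _ => ?_
    rw [← Finset.sum_sub_distrib, ← Finset.sum_add_distrib]
    refine Finset.sum_congr rfl fun q _ => ?_
    ring
  have key : ∀ t : ℝ, -(c i) ≤ t → 0 ≤ t ^ 2 * a - 2 * t * B := by
    intro t ht
    have hd : ∀ j, 0 ≤ c j + if j = i then t else 0 := by
      intro j
      by_cases h : j = i
      · subst h; simp; linarith
      · simp [h, hc j]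
    have := hFle _ hd
    rw [expand] at this
    linarith
  have hB : B = 0 := by
    by_contra hB
    have hBpos : 0 < |B| := abs_pos.mpr hB
    set δ : ℝ := min (c i / |B|) (1 / (a + 1)) with hδdef
    have hδpos : 0 < δ := lt_min (div_pos hi hBpos) (by positivity)
    have hδ1 : δ ≤ c i / |B| := min_le_left _ _
    have hδ2 : δ ≤ 1 / (a + 1) := min_le_right _ _
    have habs : |B| * δ ≤ c i := by
      rw [mul_comm]
      exact (le_div_iff₀ hBpos).mp hδ1
    have ht : -(c i) ≤ B * δ := by
      have : |B * δ| ≤ c i := by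
        rw [abs_mul, abs_of_pos hδpos]; exact habs
      linarith [neg_abs_le (B * δ)]
    have hkey := key (B * δ) ht
    have hδa : δ * a < 2 := by
      have h1 : δ * (a + 1) ≤ 1 := (le_div_iff₀ (by positivity : (0:ℝ) < a + 1)).mp hδ2
      have h2 : δ * a = δ * (a + 1) - δ := by ring
      linarith
    have hB2 : 0 < B ^ 2 := by rw [← sq_abs]; exact pow_pos hBpos 2
    have hprod : 0 < B ^ 2 * δ := mul_pos hB2 hδpos
    have e3 : (B * δ) ^ 2 * a - 2 * (B * δ) * B = B ^ 2 * δ * (δ * a - 2) := by ring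
    have e4 : B ^ 2 * δ * (δ * a - 2) < 0 :=
      mul_neg_of_pos_of_neg hprod (by linarith)
    linarith
  -- Now compute B
  have hB1 : B = (φ i ⬝ᵥ φ i) - ∑ j, c j * (φ i ⬝ᵥ φ j) ^ 2 := by
    rw [hBdef]
    have e2 : ∀ p q, A p q * (x p * x q)
        = (if p = q then x p * x q else 0) - ∑ j, c j * (φ j p * φ j q) * (x p * x q) := by
      intro p q
      simp only [hA, Matrix.sub_apply, Matrix.one_apply, frameOp, Matrix.sum_apply,
        Matrix.smul_apply, Matrix.vecMulVec_apply, smul_eq_mul]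
      rw [sub_mul, Finset.sum_mul]
      congr 1
      split <;> simp
    simp only [e2, Finset.sum_sub_distrib]
    congr 1
    · simp only [Finset.sum_ite_eq, Finset.mem_univ, if_true, dotProduct, hx]
    · have swap1 : ∀ p : Fin N, ∑ q, ∑ j, c j * (φ j p * φ j q) * (x p * x q)
          = ∑ j, ∑ q, c j * (φ j p * φ j q) * (x p * x q) := fun p => Finset.sum_comm
      simp only [swap1]
      rw [Finset.sum_comm]
      refine Finset.sum_congr rfl fun j _ => ?_
      have hdp : φ i ⬝ᵥ φ j = ∑ p, x p * φ j p := rfl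
      rw [hdp, pow_two, Finset.sum_mul_sum, Finset.mul_sum]
      refine Finset.sum_congr rfl fun p _ => ?_
      rw [Finset.mul_sum]
      refine Finset.sum_congr rfl fun q _ => ?_
      ring
  rw [hB1] at hB
  linarith
end

section
/- Let Φ = (φ_1, …, φ_M) be a frame for ℝ² (its vectors span ℝ²), and suppose c' ∈ ℝ^M with c'_i ≥ 0 attains the infimum of ‖I_2 − S(c)‖_F over all c ∈ ℝ^M with c_i ≥ 0. Then S(c') is invertible; in particular, inf{‖I_2 − S(c)‖_F : c ≥ 0} < 1. -/
lemma frameOp_entry {N M : ℕ} (φ : Fin M → (Fin N → ℝ)) (c : Fin M → ℝ)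
    (i j : Fin N) : frameOp φ c i j = ∑ k, c k * (φ k i * φ k j) := by
  simp [frameOp, Matrix.sum_apply, Matrix.vecMulVec_apply]

lemma frobNorm_two (A : Matrix (Fin 2) (Fin 2) ℝ) :
    frobNorm A = Real.sqrt (A 0 0 ^ 2 + A 0 1 ^ 2 + A 1 0 ^ 2 + A 1 1 ^ 2) := by
  unfold frobNorm
  congr 1
  rw [Fin.sum_univ_two, Fin.sum_univ_two, Fin.sum_univ_two]
  ring

lemma frobNorm_lt_one_of_sq (A : Matrix (Fin 2) (Fin 2) ℝ)
    (h : A 0 0 ^ 2 + A 0 1 ^ 2 + A 1 0 ^ 2 + A 1 1 ^ 2 < 1) : frobNorm A < 1 := by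
  rw [frobNorm_two]
  have h0 : (0:ℝ) ≤ A 0 0 ^ 2 + A 0 1 ^ 2 + A 1 0 ^ 2 + A 1 1 ^ 2 := by positivity
  calc Real.sqrt (A 0 0 ^ 2 + A 0 1 ^ 2 + A 1 0 ^ 2 + A 1 1 ^ 2)
      < Real.sqrt 1 := Real.sqrt_lt_sqrt h0 h
    _ = 1 := Real.sqrt_one

lemma sq_of_frobNorm_lt_one (A : Matrix (Fin 2) (Fin 2) ℝ)
    (h : frobNorm A < 1) : A 0 0 ^ 2 + A 0 1 ^ 2 + A 1 0 ^ 2 + A 1 1 ^ 2 < 1 := by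
  rw [frobNorm_two] at h
  have h0 : (0:ℝ) ≤ A 0 0 ^ 2 + A 0 1 ^ 2 + A 1 0 ^ 2 + A 1 1 ^ 2 := by positivity
  nlinarith [Real.sq_sqrt h0, Real.sqrt_nonneg (A 0 0 ^ 2 + A 0 1 ^ 2 + A 1 0 ^ 2 + A 1 1 ^ 2)]

/-- if `Φ` is a frame for `ℝ²` and `c' ≥ 0` attains the infimum of
`‖I₂ - S(c)‖_F` over `c ≥ 0`, then `S(c')` is invertible; in particular
`inf {‖I₂ - S(c)‖_F : c ≥ 0} < 1`. -/
theorem stmt_15 (M : ℕ) (φ : Fin M → (Fin 2 → ℝ))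
    (hspan : Submodule.span ℝ (Set.range φ) = ⊤)
    (c' : Fin M → ℝ) (hc' : ∀ i, 0 ≤ c' i)
    (hopt : ∀ d : Fin M → ℝ, (∀ i, 0 ≤ d i) →
      frobNorm (1 - frameOp φ c') ≤ frobNorm (1 - frameOp φ d)) :
    IsUnit (frameOp φ c') ∧
      sInf {r : ℝ | ∃ c : Fin M → ℝ, (∀ i, 0 ≤ c i) ∧ r = frobNorm (1 - frameOp φ c)} < 1 := by
  classical
  set a : ℝ := ∑ k, φ k 0 * φ k 0 with ha
  set b : ℝ := ∑ k, φ k 0 * φ k 1 with hb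
  set dd : ℝ := ∑ k, φ k 1 * φ k 1 with hdd
  have hb' : ∑ k, φ k 1 * φ k 0 = b := by
    rw [hb]; exact Finset.sum_congr rfl fun k _ => mul_comm _ _
  -- nondegeneracy from the span hypothesis
  have hker : ∀ x0 x1 : ℝ, (∀ k, φ k 0 * x0 + φ k 1 * x1 = 0) → x0 = 0 ∧ x1 = 0 := by
    intro x0 x1 h
    have hv : ∀ v ∈ Submodule.span ℝ (Set.range φ), v 0 * x0 + v 1 * x1 = 0 := by
      intro v hv
      induction hv using Submodule.span_induction with
      | mem v hvmem => obtain ⟨k, rfl⟩ := hvmem; exact h k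
      | zero => simp
      | add u w _ _ hu hw =>
          simp only [Pi.add_apply]; linear_combination hu + hw
      | smul r u _ hu =>
          simp only [Pi.smul_apply, smul_eq_mul]; linear_combination r * hu
    have e0 := hv (fun j => if j = 0 then 1 else 0) (by rw [hspan]; trivial)
    have e1 := hv (fun j => if j = 1 then 1 else 0) (by rw [hspan]; trivial)
    norm_num at e0 e1
    exact ⟨e0, e1⟩
  -- the quadratic form of the unweighted frame operator
  have hq : ∀ x0 x1 : ℝ, a * x0 ^ 2 + 2 * b * (x0 * x1) + dd * x1 ^ 2
      = ∑ k, (φ k 0 * x0 + φ k 1 * x1) ^ 2 := by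
    intro x0 x1
    have hterm : ∀ k : Fin M, (φ k 0 * x0 + φ k 1 * x1) ^ 2
        = (φ k 0 * φ k 0) * x0 ^ 2 + (φ k 0 * φ k 1) * (2 * (x0 * x1))
          + (φ k 1 * φ k 1) * x1 ^ 2 := fun k => by ring
    simp_rw [hterm, Finset.sum_add_distrib, ← Finset.sum_mul]
    rw [← ha, ← hb, ← hdd]; ring
  have hqpos : ∀ x0 x1 : ℝ, ¬(x0 = 0 ∧ x1 = 0) →
      0 < a * x0 ^ 2 + 2 * b * (x0 * x1) + dd * x1 ^ 2 := by
    intro x0 x1 hx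
    rw [hq]
    have hnn : ∀ k ∈ Finset.univ, (0:ℝ) ≤ (φ k 0 * x0 + φ k 1 * x1) ^ 2 :=
      fun k _ => sq_nonneg _
    rcases lt_or_eq_of_le (Finset.sum_nonneg hnn) with h | h
    · exact h
    · exfalso
      apply hx
      refine hker x0 x1 fun k => ?_
      have := (Finset.sum_eq_zero_iff_of_nonneg hnn).mp h.symm k (Finset.mem_univ k)
      exact sq_eq_zero_iff.mp this
  have hapos : 0 < a := by
    have := hqpos 1 0 (by norm_num)
    nlinarith [this]
  have hddnn : 0 ≤ dd := by
    rw [hdd]; exact Finset.sum_nonneg fun k _ => mul_self_nonneg _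
  have hdet : 0 < a * dd - b * b := by
    have h := hqpos (-b) a (fun hh => by exact absurd hh.2 (ne_of_gt hapos))
    nlinarith [h, hapos]
  -- the good scalar
  have hQpos : (0:ℝ) < a * a + 2 * b * b + dd * dd := by nlinarith [hapos, sq_nonneg b, sq_nonneg dd]
  set t : ℝ := (a + dd) / (a * a + 2 * b * b + dd * dd) with htdef
  have ht0 : 0 ≤ t := div_nonneg (by linarith) hQpos.le
  have h3 : 1 < t * (a + dd) := by
    rw [htdef, div_mul_eq_mul_div, lt_div_iff₀ hQpos]
    nlinarith [hdet]
  have h4 : t * t * (a * a + 2 * b * b + dd * dd) = t * (a + dd) := by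
    rw [htdef]; field_simp
  -- value at the constant weight t
  have hop : ∀ i j, frameOp φ (fun _ => t) i j = t * ∑ k, φ k i * φ k j := by
    intro i j; rw [frameOp_entry, Finset.mul_sum]
  have hval : frobNorm (1 - frameOp φ (fun _ => t)) < 1 := by
    apply frobNorm_lt_one_of_sq
    have e00 : (1 - frameOp φ (fun _ => t)) 0 0 = 1 - t * a := by
      simp [Matrix.sub_apply, Matrix.one_apply, hop, ha]
    have e01 : (1 - frameOp φ (fun _ => t)) 0 1 = -(t * b) := by
      simp [Matrix.sub_apply, Matrix.one_apply, hop, hb]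
    have e10 : (1 - frameOp φ (fun _ => t)) 1 0 = -(t * b) := by
      simp [Matrix.sub_apply, Matrix.one_apply, hop, hb']
    have e11 : (1 - frameOp φ (fun _ => t)) 1 1 = 1 - t * dd := by
      simp [Matrix.sub_apply, Matrix.one_apply, hop, hdd]
    rw [e00, e01, e10, e11]
    nlinarith [h3, h4]
  have hF : frobNorm (1 - frameOp φ c') < 1 :=
    lt_of_le_of_lt (hopt (fun _ => t) (fun _ => ht0)) hval
  -- invertibility
  have hFsq := sq_of_frobNorm_lt_one _ hF
  have hdetS : (frameOp φ c').det ≠ 0 := by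
    intro h0
    obtain ⟨v, hvne, hv0⟩ := Matrix.exists_mulVec_eq_zero_iff.mpr h0
    have hrow0 : frameOp φ c' 0 0 * v 0 + frameOp φ c' 0 1 * v 1 = 0 := by
      have := congrFun hv0 0
      simpa [Matrix.mulVec, dotProduct, Fin.sum_univ_two] using this
    have hrow1 : frameOp φ c' 1 0 * v 0 + frameOp φ c' 1 1 * v 1 = 0 := by
      have := congrFun hv0 1
      simpa [Matrix.mulVec, dotProduct, Fin.sum_univ_two] using this
    have hE00 : (1 - frameOp φ c') 0 0 = 1 - frameOp φ c' 0 0 := by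
      simp [Matrix.sub_apply, Matrix.one_apply]
    have hE01 : (1 - frameOp φ c') 0 1 = -(frameOp φ c' 0 1) := by
      simp [Matrix.sub_apply, Matrix.one_apply]
    have hE10 : (1 - frameOp φ c') 1 0 = -(frameOp φ c' 1 0) := by
      simp [Matrix.sub_apply, Matrix.one_apply]
    have hE11 : (1 - frameOp φ c') 1 1 = 1 - frameOp φ c' 1 1 := by
      simp [Matrix.sub_apply, Matrix.one_apply]
    rw [hE00, hE01, hE10, hE11] at hFsq
    have hvpos : 0 < v 0 ^ 2 + v 1 ^ 2 := by
      rcases Function.ne_iff.mp hvne with ⟨i, hi⟩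
      simp only [Pi.zero_apply] at hi
      fin_cases i
      · positivity
      · positivity
    set S00 := frameOp φ c' 0 0 with hS00
    set S01 := frameOp φ c' 0 1 with hS01
    set S10 := frameOp φ c' 1 0 with hS10
    set S11 := frameOp φ c' 1 1 with hS11
    clear_value S00 S01 S10 S11
    clear hopt hq hqpos hker hop hval hF hv0 h0 hb' ha hb hdd htdef
    clear hE00 hE01 hE10 hE11 hS00 hS01 hS10 hS11
    have hv0eq : v 0 = (1 - S00) * v 0 - S01 * v 1 := by linear_combination hrow0
    have hv1eq : v 1 = (1 - S11) * v 1 - S10 * v 0 := by linear_combination hrow1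
    have hA : v 0 ^ 2 = ((1 - S00) * v 0 - S01 * v 1) ^ 2 := by rw [← hv0eq]
    have hB : v 1 ^ 2 = ((1 - S11) * v 1 - S10 * v 0) ^ 2 := by rw [← hv1eq]
    nlinarith [hFsq, hvpos, hA, hB,
      sq_nonneg ((1 - S00) * v 1 + S01 * v 0),
      sq_nonneg ((1 - S11) * v 0 + S10 * v 1)]
  have hunit : IsUnit (frameOp φ c') :=
    (Matrix.isUnit_iff_isUnit_det _).mpr (isUnit_iff_ne_zero.mpr hdetS)
  refine ⟨hunit, ?_⟩
  have hmem : frobNorm (1 - frameOp φ c')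
      ∈ {r : ℝ | ∃ c : Fin M → ℝ, (∀ i, 0 ≤ c i) ∧ r = frobNorm (1 - frameOp φ c)} :=
    ⟨c', hc', rfl⟩
  have hbdd : BddBelow {r : ℝ | ∃ c : Fin M → ℝ, (∀ i, 0 ≤ c i) ∧ r = frobNorm (1 - frameOp φ c)} := by
    refine ⟨0, fun r hr => ?_⟩
    obtain ⟨c, _, rfl⟩ := hr
    exact Real.sqrt_nonneg _
  exact lt_of_le_of_lt (csInf_le hbdd hmem) hF
end
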